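/- arXiv:0806.0201 — 3 statements merged into one kernel-verified Lean document; each statement's English description precedes it below -/
import Mathlib

section
/- Let ℓ ≥ 2 be a natural number and let a₁, …, a_ℓ, b be real numbers satisfying (∑_{i=1}^{ℓ} a_i)² = (ℓ − 1)(∑_{i=1}^{ℓ} a_i² + b). Then 2·a₁·a₂ ≥ b. -/
/-- B.-Y. Chen's algebraic lemma: if `ℓ ≥ 2` and real numbers
`a 0, …, a (ℓ-1), b` satisfy `(∑ aᵢ)² = (ℓ - 1)(∑ aᵢ² + b)`,
then `2 a₁ a₂ ≥ b` (here `a 0, a 1` play the roles of `a₁, a₂`). -/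
theorem chen_lemma_ineq (ℓ : ℕ) (hℓ : 2 ≤ ℓ) (a : ℕ → ℝ) (b : ℝ)
    (h : (∑ i ∈ Finset.range ℓ, a i) ^ 2 =
      ((ℓ : ℝ) - 1) * ((∑ i ∈ Finset.range ℓ, (a i) ^ 2) + b)) :
    2 * a 0 * a 1 ≥ b := by
  obtain ⟨n, rfl⟩ : ∃ n, ℓ = n + 2 := ⟨ℓ - 2, by omega⟩
  set S : ℝ := ∑ i ∈ Finset.range n, a (i + 2) with hSdef
  set Q : ℝ := ∑ i ∈ Finset.range n, (a (i + 2)) ^ 2 with hQdef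
  have hsum : (∑ i ∈ Finset.range (n + 2), a i) = a 0 + a 1 + S := by
    rw [Finset.sum_range_succ' _ (n + 1), Finset.sum_range_succ' _ n]
    ring
  have hsumsq : (∑ i ∈ Finset.range (n + 2), (a i) ^ 2)
      = a 0 ^ 2 + a 1 ^ 2 + Q := by
    rw [Finset.sum_range_succ' _ (n + 1), Finset.sum_range_succ' _ n]
    ring
  have hCS : S ^ 2 ≤ (n : ℝ) * Q := by
    have := sq_sum_le_card_mul_sum_sq (s := Finset.range n)
      (f := fun i => a (i + 2))
    simpa [hSdef, hQdef] using this
  rw [hsum, hsumsq] at h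
  push_cast at h
  rcases Nat.eq_zero_or_pos n with rfl | hn
  · simp only [Finset.range_zero, Finset.sum_empty, hSdef, hQdef] at h ⊢
    nlinarith [h]
  · have hn1 : (0 : ℝ) < (n : ℝ) := by exact_mod_cast hn
    set c : ℝ := a 0 + a 1 with hc
    have key : (c + S) ^ 2 ≤ ((n : ℝ) + 1) * (c ^ 2 + Q) := by
      have h1 : (0:ℝ) ≤ ((n:ℝ) * c - S) ^ 2 := sq_nonneg _
      have h2 : (n:ℝ) * S ^ 2 ≤ (n:ℝ) * ((n:ℝ) * Q) :=
        mul_le_mul_of_nonneg_left hCS hn1.le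
      nlinarith [h1, h2, hn1]
    have hfin : ((n:ℝ) + 1) * (a 0 ^ 2 + a 1 ^ 2 + Q + b)
        ≤ ((n:ℝ) + 1) * (c ^ 2 + Q) := by linarith [h, key]
    have hle := le_of_mul_le_mul_left hfin (by linarith : (0:ℝ) < (n:ℝ)+1)
    rw [hc] at hle
    nlinarith [hle]
end

section
/- Let ℓ ≥ 2 be a natural number and let a₁, …, a_ℓ, b be real numbers satisfying (∑_{i=1}^{ℓ} a_i)² = (ℓ − 1)(∑_{i=1}^{ℓ} a_i² + b). Then equality 2·a₁·a₂ = b holds if and only if a₁ + a₂ = a₃ = a₄ = ⋯ = a_ℓ. -/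
open Finset

lemma sq_sum_eq_card_mul_sum_sq_iff (n : ℕ) (hn : 0 < n) (f : ℕ → ℝ) :
    ((∑ i ∈ range n, f i) ^ 2 = (n : ℝ) * ∑ i ∈ range n, f i ^ 2) ↔
      ∀ i < n, (n : ℝ) * f i = ∑ j ∈ range n, f j := by
  set S := ∑ i ∈ range n, f i with hS
  set Q := ∑ i ∈ range n, f i ^ 2 with hQ
  have key : ∑ i ∈ range n, ((n : ℝ) * f i - S) ^ 2 = (n : ℝ) * ((n : ℝ) * Q - S ^ 2) := by
    have h1 : ∑ i ∈ range n, ((n : ℝ) * f i - S) ^ 2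
        = ∑ i ∈ range n, ((n : ℝ) ^ 2 * f i ^ 2 - 2 * (n : ℝ) * S * f i + S ^ 2) := by
      apply sum_congr rfl; intros; ring
    rw [h1, sum_add_distrib, sum_sub_distrib, ← mul_sum, ← mul_sum, ← hS, ← hQ,
      sum_const, card_range, nsmul_eq_mul]
    ring
  constructor
  · intro he i hi
    have hz : ∑ i ∈ range n, ((n : ℝ) * f i - S) ^ 2 = 0 := by
      rw [key, ← he]; ring
    have := (sum_eq_zero_iff_of_nonneg (fun i _ => sq_nonneg _)).mp hz i (mem_range.mpr hi)
    have := pow_eq_zero_iff (n := 2) (by norm_num) |>.mp this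
    linarith
  · intro hall
    have hz : ∑ i ∈ range n, ((n : ℝ) * f i - S) ^ 2 = 0 := by
      apply sum_eq_zero; intro i hi
      rw [hall i (mem_range.mp hi)]; ring
    have hn' : (0 : ℝ) < n := by exact_mod_cast hn
    rw [key] at hz
    have : (n : ℝ) * Q - S ^ 2 = 0 := by
      rcases mul_eq_zero.mp hz with h | h
      · exact absurd h (ne_of_gt hn')
      · exact h
    linarith

/-- Equality characterization in B.-Y. Chen's algebraic lemma: under
`(∑ aᵢ)² = (ℓ - 1)(∑ aᵢ² + b)`, equality `2 a₁ a₂ = b` holds iff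
`a₁ + a₂ = a₃ = ⋯ = a_ℓ` (here `a 0, a 1` play the roles of `a₁, a₂`,
and the chain condition says `a i = a 0 + a 1` for all `2 ≤ i < ℓ`). -/
theorem chen_lemma_eq_iff (ℓ : ℕ) (hℓ : 2 ≤ ℓ) (a : ℕ → ℝ) (b : ℝ)
    (h : (∑ i ∈ Finset.range ℓ, a i) ^ 2 =
      ((ℓ : ℝ) - 1) * ((∑ i ∈ Finset.range ℓ, (a i) ^ 2) + b)) :
    2 * a 0 * a 1 = b ↔ ∀ i, 2 ≤ i → i < ℓ → a i = a 0 + a 1 := by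
  obtain ⟨n, rfl⟩ : ∃ n, ℓ = n + 2 := ⟨ℓ - 2, by omega⟩
  set D : ℕ → ℝ := fun i => if i = 0 then a 0 + a 1 else a (i + 1) with hD
  have hsum : ∑ i ∈ range (n + 1), D i = ∑ i ∈ range (n + 2), a i := by
    rw [Finset.sum_range_succ' D n, Finset.sum_range_succ' a (n + 1),
      Finset.sum_range_succ' (fun i => a (i + 1)) n]
    simp [hD]
    ring
  have hsq : ∑ i ∈ range (n + 1), D i ^ 2
      = (∑ i ∈ range (n + 2), a i ^ 2) + 2 * a 0 * a 1 := by
    rw [Finset.sum_range_succ' (fun i => D i ^ 2) n,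
      Finset.sum_range_succ' (fun i => a i ^ 2) (n + 1),
      Finset.sum_range_succ' (fun i => a (i + 1) ^ 2) n]
    simp [hD]
    ring
  have hcast : ((n + 2 : ℕ) : ℝ) - 1 = ((n + 1 : ℕ) : ℝ) := by push_cast; ring
  have hiff := sq_sum_eq_card_mul_sum_sq_iff (n + 1) (by omega) D
  have heq : (2 * a 0 * a 1 = b) ↔
      (∑ i ∈ range (n + 1), D i) ^ 2 = ((n + 1 : ℕ) : ℝ) * ∑ i ∈ range (n + 1), D i ^ 2 := by
    rw [hsum, hsq, h, hcast]
    constructor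
    · intro hb; rw [← hb]
    · intro he
      have hn' : (0 : ℝ) < ((n + 1 : ℕ) : ℝ) := by positivity
      have := mul_left_cancel₀ (ne_of_gt hn') he
      linarith
  rw [heq, hiff]
  have hnpos : (0 : ℝ) < ((n + 1 : ℕ) : ℝ) := by positivity
  constructor
  · intro hall i h2 hlt
    obtain ⟨j, rfl⟩ : ∃ j, i = j + 2 := ⟨i - 2, by omega⟩
    have h0 := hall 0 (by omega)
    have hj := hall (j + 1) (by omega)
    have hD0 : D 0 = a 0 + a 1 := by simp [hD]
    have hDj : D (j + 1) = a (j + 2) := by simp [hD]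
    rw [hD0] at h0
    rw [hDj] at hj
    have : ((n + 1 : ℕ) : ℝ) * a (j + 2) = ((n + 1 : ℕ) : ℝ) * (a 0 + a 1) := by
      rw [h0, hj]
    exact mul_left_cancel₀ (ne_of_gt hnpos) this
  · intro hall i hi
    have hDall : ∀ j, j < n + 1 → D j = a 0 + a 1 := by
      intro j hj
      rcases Nat.eq_zero_or_pos j with h0 | h1
      · simp [hD, h0]
      · have : D j = a (j + 1) := by simp [hD, Nat.pos_iff_ne_zero.mp h1]
        rw [this, hall (j + 1) (by omega) (by omega)]
    have hSval : ∑ j ∈ range (n + 1), D j = ((n + 1 : ℕ) : ℝ) * (a 0 + a 1) := by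
      rw [Finset.sum_congr rfl (fun j hj => hDall j (mem_range.mp hj))]
      simp; ring
    rw [hDall i hi, hSval]
end

section
/- Let a₁, a₂, a₃, b be real numbers satisfying (a₁ + a₂ + a₃)² = 2(a₁² + a₂² + a₃² + b). Then 2·a₁·a₂ ≥ b, and equality holds if and only if a₁ + a₂ = a₃. -/
/-- The `ℓ = 3` instance of B.-Y. Chen's algebraic lemma: if real numbers
`a₁, a₂, a₃, b` satisfy `(a₁ + a₂ + a₃)² = 2(a₁² + a₂² + a₃² + b)`, then
`2 a₁ a₂ ≥ b`, with equality iff `a₁ + a₂ = a₃`. -/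
theorem chen_lemma_three (a₁ a₂ a₃ b : ℝ)
    (h : (a₁ + a₂ + a₃) ^ 2 = 2 * (a₁ ^ 2 + a₂ ^ 2 + a₃ ^ 2 + b)) :
    2 * a₁ * a₂ ≥ b ∧ (2 * a₁ * a₂ = b ↔ a₁ + a₂ = a₃) := by
  have key : 2 * a₁ * a₂ - b = (a₁ + a₂ - a₃) ^ 2 / 2 := by nlinarith [h]
  constructor
  · nlinarith [sq_nonneg (a₁ + a₂ - a₃)]
  · constructor
    · intro he
      have : (a₁ + a₂ - a₃) ^ 2 = 0 := by nlinarith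
      have := pow_eq_zero_iff (n := 2) (by norm_num) |>.mp this
      linarith
    · intro he; nlinarith [he]
end
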